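/- Let X = {−n,…,n}, H(x) = −|x|, π_β(x) ∝ e^{−βH(x)}, β > 0, let P_β be the Metropolis–Hastings chain for π_β with nearest-neighbor proposal, and G = {e,g} with gx = −x. Let K := (1/2)P_β + (1/4)U_g P_β + (1/4) P_β U_g be the independent double average. Then the right spectral gap of K satisfies λ(K) ≥ (1 − e^{−β})/(36 n³). -/

import Mathlib

open Matrix

/-- The state space `⟦-n, n⟧ ⊆ ℤ`. -/
abbrev VState (n : ℕ) : Type := ↥(Set.Icc (-(n : ℤ)) (n : ℤ))

/-- The V-shaped Hamiltonian `H(x) = -|x|`. -/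
noncomputable def vH {n : ℕ} (x : VState n) : ℝ := -|((x : ℤ) : ℝ)|

/-- The Gibbs distribution `π_β(x) ∝ exp(-β H(x))`. -/
noncomputable def vGibbs (n : ℕ) (β : ℝ) (x : VState n) : ℝ :=
  Real.exp (-β * vH x) / ∑ z : VState n, Real.exp (-β * vH z)

/-- Off-diagonal Metropolis transition rates for the nearest-neighbour proposal:
`P_β(x, x±1) = (1/2) exp(-β (H(x±1) - H(x))₊)`. -/
noncomputable def vProp (n : ℕ) (β : ℝ) (x y : VState n) : ℝ :=
  if (y : ℤ) = (x : ℤ) + 1 ∨ (y : ℤ) = (x : ℤ) - 1 then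
    (1 / 2) * Real.exp (-β * max (vH y - vH x) 0)
  else 0

/-- The Metropolis–Hastings kernel `P_β`, with diagonal entries filling each row. -/
noncomputable def vMH (n : ℕ) (β : ℝ) : Matrix (VState n) (VState n) ℝ :=
  fun x y => if y = x then 1 - ∑ z, vProp n β x z else vProp n β x y

/-- The permutation matrix of the flip `g : x ↦ -x`. -/
noncomputable def vFlip (n : ℕ) : Matrix (VState n) (VState n) ℝ :=
  fun x y => if (y : ℤ) = -(x : ℤ) then 1 else 0

/-- The independent double average `K = (1/2) P_β + (1/4) U_g P_β + (1/4) P_β U_g`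
with respect to `G = {e, g}`. -/
noncomputable def vK (n : ℕ) (β : ℝ) : Matrix (VState n) (VState n) ℝ :=
  (1 / 2 : ℝ) • vMH n β + (1 / 4 : ℝ) • (vFlip n * vMH n β) +
    (1 / 4 : ℝ) • (vMH n β * vFlip n)

/-!
Let `e` be the even part of `f` under the flip `x ↦ -x`. Since `P_β` commutes with the flip,
`K f = P_β e`, and since `π_β` is flip-invariant, the Dirichlet form of `K` at `f` equals
`‖f‖² - ‖e‖² + 𝓔_{P_β}(e)`. The function `e` is even with mean zero, so it is controlled by the
canonical paths `|x| → |x| + 1 → ⋯ → n`: the outward edges are accepted with probability `1/2`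
and, as `β ≥ 0`, `π_β` increases along them, which gives `‖e‖² ≤ 4 (2n+1) n 𝓔_{P_β}(e)`.
Hence the Dirichlet form is at least `1 / (4 (2n+1) n) ≥ 1 / (12 n²)`, which exceeds the claimed
bound.
-/

open Finset Function

section Reversible

variable {α : Type*} [Fintype α] {P : Matrix α α ℝ} {π : α → ℝ}

theorem sum_mul_sub_mulVec_eq_half_sum_sq (hrow : ∀ x, ∑ y, P x y = 1)
    (hrev : ∀ x y, π x * P x y = π y * P y x) (g : α → ℝ) :
    ∑ x, π x * g x * (g x - P.mulVec g x) =
      (1 / 2) * ∑ x, ∑ y, π x * P x y * (g x - g y) ^ 2 := by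
  have hrowsum : ∀ x, g x - P.mulVec g x = ∑ y, P x y * (g x - g y) := fun x => by
    simp only [mul_sub, sum_sub_distrib, ← sum_mul, hrow, one_mul, Matrix.mulVec, dotProduct]
  have hswap : ∑ x, ∑ y, π x * P x y * (g x * (g x - g y)) =
      ∑ x, ∑ y, π x * P x y * (g y * (g y - g x)) := by
    rw [sum_comm]
    refine sum_congr rfl fun y _ => sum_congr rfl fun x _ => ?_
    rw [hrev]
  have hsplit : ∑ x, ∑ y, π x * P x y * (g x - g y) ^ 2 =
      ∑ x, ∑ y, π x * P x y * (g x * (g x - g y)) +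
        ∑ x, ∑ y, π x * P x y * (g y * (g y - g x)) := by
    simp only [← sum_add_distrib]
    exact sum_congr rfl fun x _ => sum_congr rfl fun y _ => by ring
  have hleft : ∑ x, π x * g x * (g x - P.mulVec g x) =
      ∑ x, ∑ y, π x * P x y * (g x * (g x - g y)) := by
    refine sum_congr rfl fun x _ => ?_
    rw [hrowsum, mul_sum]
    exact sum_congr rfl fun y _ => by ring
  rw [hleft, hsplit, ← hswap]
  ring

end Reversible

theorem sq_sub_le_mul_sum_sq_sub (a : ℕ → ℝ) {m n : ℕ} (h : m ≤ n) :
    (a m - a n) ^ 2 ≤ (n - m : ℕ) * ∑ k ∈ Ico m n, (a k - a (k + 1)) ^ 2 := by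
  have htel : a m - a n = ∑ k ∈ Ico m n, (a k - a (k + 1)) := by
    have := sum_Ico_sub a h
    rw [← neg_sub, ← this, ← sum_neg_distrib]
    simp only [neg_sub]
  rw [htel, ← Nat.card_Ico]
  exact sq_sum_le_card_mul_sum_sq

theorem sum_mul_sq_le_sum_mul_sq_sub {α : Type*} [Fintype α] {w g : α → ℝ} (hw : ∀ x, 0 ≤ w x)
    (hg : ∑ x, w x * g x = 0) (c : ℝ) :
    ∑ x, w x * g x ^ 2 ≤ ∑ x, w x * (g x - c) ^ 2 := by
  have hexpand : ∑ x, w x * (g x - c) ^ 2 =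
      ∑ x, w x * g x ^ 2 - 2 * c * ∑ x, w x * g x + c ^ 2 * ∑ x, w x := by
    rw [mul_sum, mul_sum, ← sum_sub_distrib, ← sum_add_distrib]
    exact sum_congr rfl fun x _ => by ring
  rw [hexpand, hg]
  nlinarith [sum_nonneg fun x (_ : x ∈ univ) => hw x, sq_nonneg c]

section Involution

variable {α : Type*} {σ : α → α}

noncomputable def evenPart (σ : α → α) (f : α → ℝ) (x : α) : ℝ := (f x + f (σ x)) / 2

theorem evenPart_apply_of_involutive (hσ : Involutive σ) (f : α → ℝ) (x : α) :
    evenPart σ f (σ x) = evenPart σ f x := by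
  rw [evenPart, evenPart, hσ x, add_comm]

variable [Fintype α]

theorem sum_comp_of_involutive (hσ : Involutive σ) (h : α → ℝ) :
    ∑ x, h (σ x) = ∑ x, h x :=
  Equiv.sum_comp (hσ.toPerm σ) h

theorem sum_mul_evenPart_mul (hσ : Involutive σ) {w g : α → ℝ} (hw : ∀ x, w (σ x) = w x)
    (hg : ∀ x, g (σ x) = g x) (f : α → ℝ) :
    ∑ x, w x * evenPart σ f x * g x = ∑ x, w x * f x * g x := by
  have hflip : ∑ x, w x * f (σ x) * g x = ∑ x, w x * f x * g x := by
    rw [← sum_comp_of_involutive hσ]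
    simp only [hw, hg, hσ _]
  calc ∑ x, w x * evenPart σ f x * g x
      = (1 / 2) * (∑ x, w x * f x * g x + ∑ x, w x * f (σ x) * g x) := by
        rw [← sum_add_distrib, mul_sum]
        exact sum_congr rfl fun x _ => by rw [evenPart]; ring
    _ = ∑ x, w x * f x * g x := by rw [hflip]; ring

theorem sum_mul_evenPart_sq_le (hσ : Involutive σ) {w : α → ℝ} (hw : ∀ x, w (σ x) = w x)
    (hw0 : ∀ x, 0 ≤ w x) (f : α → ℝ) :
    ∑ x, w x * evenPart σ f x ^ 2 ≤ ∑ x, w x * f x ^ 2 := by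
  have hproj : ∑ x, w x * evenPart σ f x ^ 2 = ∑ x, w x * f x * evenPart σ f x := by
    rw [← sum_mul_evenPart_mul hσ hw (evenPart_apply_of_involutive hσ f) f]
    simp only [sq, mul_assoc]
  have hdefect : 0 ≤ ∑ x, w x * (f x - evenPart σ f x) ^ 2 :=
    sum_nonneg fun x _ => mul_nonneg (hw0 x) (sq_nonneg _)
  have hexpand : ∑ x, w x * (f x - evenPart σ f x) ^ 2 = ∑ x, w x * f x ^ 2
      - 2 * ∑ x, w x * f x * evenPart σ f x + ∑ x, w x * evenPart σ f x ^ 2 := by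
    rw [mul_sum, ← sum_sub_distrib, ← sum_add_distrib]
    exact sum_congr rfl fun x _ => by ring
  linarith

theorem mulVec_comp_of_involutive (hσ : Involutive σ) {P : Matrix α α ℝ}
    (hP : ∀ x y, P (σ x) (σ y) = P x y) (g : α → ℝ) (x : α) :
    P.mulVec (g ∘ σ) x = P.mulVec g (σ x) := by
  simp only [Matrix.mulVec, dotProduct, Function.comp_apply]
  rw [← sum_comp_of_involutive hσ]
  simp only [hσ _, ← hP (σ x)]

end Involution

namespace VState

variable {n : ℕ}

instance : InvolutiveNeg (VState n) where
  neg x := ⟨-(x : ℤ), by obtain ⟨v, hv⟩ := x; simp only [Set.mem_Icc] at hv ⊢; omega⟩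
  neg_neg x := Subtype.ext (neg_neg (x : ℤ))

@[simp] theorem coe_neg (x : VState n) : ((-x : VState n) : ℤ) = -(x : ℤ) := rfl

def ofNat (n k : ℕ) : VState n := ⟨min (k : ℤ) n, by simp only [Set.mem_Icc]; omega⟩

theorem coe_ofNat {k : ℕ} (hk : k ≤ n) : ((ofNat n k : VState n) : ℤ) = k := by
  simp only [ofNat]; omega

theorem natAbs_le (x : VState n) : (x : ℤ).natAbs ≤ n := by
  have := x.2
  simp only [Set.mem_Icc] at this
  omega

theorem ofNat_natAbs_eq_or_neg (x : VState n) :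
    ofNat n (x : ℤ).natAbs = x ∨ ofNat n (x : ℤ).natAbs = -x := by
  rcases le_or_gt 0 (x : ℤ) with h | h
  · exact .inl <| Subtype.ext <| by rw [coe_ofNat (natAbs_le x)]; omega
  · exact .inr <| Subtype.ext <| by rw [coe_ofNat (natAbs_le x), coe_neg]; omega

theorem card : Fintype.card (VState n) = 2 * n + 1 := by
  simp only [VState, Fintype.card_ofFinset, Int.card_Icc, sub_neg_eq_add]
  omega

end VState

section Chain

open VState

variable {n : ℕ} {β : ℝ}

theorem vH_neg (x : VState n) : vH (-x) = vH x := by simp [vH]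

theorem vH_eq_neg_natAbs (x : VState n) : vH x = -((x : ℤ).natAbs : ℝ) := by
  rw [vH, Nat.cast_natAbs, Int.cast_abs]

theorem vGibbs_neg (x : VState n) : vGibbs n β (-x) = vGibbs n β x := by
  rw [vGibbs, vGibbs, vH_neg]

theorem vGibbs_nonneg (x : VState n) : 0 ≤ vGibbs n β x :=
  div_nonneg (Real.exp_pos _).le (sum_nonneg fun _ _ => (Real.exp_pos _).le)

theorem vGibbs_le_of_natAbs_le (hβ : 0 ≤ β) {x y : VState n}
    (h : (x : ℤ).natAbs ≤ (y : ℤ).natAbs) : vGibbs n β x ≤ vGibbs n β y := by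
  refine div_le_div_of_nonneg_right ?_ (sum_nonneg fun _ _ => (Real.exp_pos _).le)
  rw [Real.exp_le_exp, vH_eq_neg_natAbs, vH_eq_neg_natAbs]
  have : ((x : ℤ).natAbs : ℝ) ≤ (y : ℤ).natAbs := by exact_mod_cast h
  nlinarith

theorem vProp_nonneg (x y : VState n) : 0 ≤ vProp n β x y := by
  unfold vProp
  split_ifs <;> positivity

theorem vProp_neg_neg (x y : VState n) : vProp n β (-x) (-y) = vProp n β x y := by
  unfold vProp
  simp only [vH_neg, coe_neg]
  exact if_congr (by omega) rfl rfl

theorem vMH_neg_neg (x y : VState n) : vMH n β (-x) (-y) = vMH n β x y := by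
  have hsum : ∑ z, vProp n β (-x) z = ∑ z, vProp n β x z := by
    rw [← sum_comp_of_involutive neg_involutive]
    simp only [vProp_neg_neg]
  simp only [vMH, neg_inj, hsum, vProp_neg_neg]

theorem sum_vMH_eq_one (x : VState n) : ∑ y, vMH n β x y = 1 := by
  have hdiag : vProp n β x x = 0 := by rw [vProp, if_neg (by omega)]
  have hoff : ∑ y ∈ univ.erase x, vMH n β x y = ∑ y, vProp n β x y := by
    rw [← sum_erase _ hdiag]
    exact sum_congr rfl fun y hy => if_neg (ne_of_mem_erase hy)
  rw [← add_sum_erase _ _ (mem_univ x), hoff, vMH, if_pos rfl]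
  ring

theorem metropolis_detailed_balance (β a b : ℝ) :
    Real.exp (-β * a) * Real.exp (-β * max (b - a) 0) =
      Real.exp (-β * b) * Real.exp (-β * max (a - b) 0) := by
  rw [← Real.exp_add, ← Real.exp_add]
  congr 1
  rcases le_total a b with h | h
  · rw [max_eq_left (by linarith), max_eq_right (by linarith)]; ring
  · rw [max_eq_right (by linarith), max_eq_left (by linarith)]; ring

theorem vGibbs_mul_vMH_comm (x y : VState n) :
    vGibbs n β x * vMH n β x y = vGibbs n β y * vMH n β y x := by
  by_cases hxy : y = x
  · rw [hxy]
  rw [vMH, vMH, if_neg hxy, if_neg (Ne.symm hxy), vGibbs, vGibbs, vProp, vProp]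
  by_cases hadj : (y : ℤ) = x + 1 ∨ (y : ℤ) = x - 1
  · rw [if_pos hadj, if_pos (by omega)]
    linear_combination (1 / 2 / ∑ z, Real.exp (-β * vH z)) *
      metropolis_detailed_balance β (vH x) (vH y)
  · rw [if_neg hadj, if_neg (by omega)]
    ring

theorem vMH_ofNat_succ {k : ℕ} (hk : k < n) : vMH n β (ofNat n k) (ofNat n (k + 1)) = 1 / 2 := by
  have hk' : ((ofNat n (k + 1) : VState n) : ℤ) = (ofNat n k : ℤ) + 1 := by
    rw [coe_ofNat hk, coe_ofNat hk.le]; push_cast; ring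
  have hdown : vH (ofNat n (k + 1)) ≤ vH (ofNat n k) := by
    rw [vH_eq_neg_natAbs, vH_eq_neg_natAbs, coe_ofNat hk, coe_ofNat hk.le, Int.natAbs_natCast,
      Int.natAbs_natCast]
    push_cast
    linarith
  rw [vMH, if_neg fun h => by simp [h] at hk', vProp, if_pos (.inl hk'),
    max_eq_right (by linarith), mul_zero, Real.exp_zero, mul_one]

theorem vFlip_mulVec (g : VState n → ℝ) (x : VState n) : (vFlip n).mulVec g x = g (-x) := by
  rw [Matrix.mulVec, dotProduct, sum_eq_single (-x)]
  · simp [vFlip]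
  · intro y _ hy
    rw [vFlip, if_neg fun h => hy (Subtype.ext (by simpa using h)), zero_mul]
  · simp

theorem vK_mulVec (f : VState n → ℝ) :
    (vK n β).mulVec f = (vMH n β).mulVec (evenPart Neg.neg f) := by
  funext x
  have hFP : (vFlip n * vMH n β).mulVec f x = (vMH n β).mulVec (f ∘ Neg.neg) x := by
    rw [← Matrix.mulVec_mulVec, vFlip_mulVec,
      mulVec_comp_of_involutive neg_involutive vMH_neg_neg]
  have hPF : (vMH n β * vFlip n).mulVec f x = (vMH n β).mulVec (f ∘ Neg.neg) x := by
    rw [← Matrix.mulVec_mulVec]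
    congr 1
    exact funext (vFlip_mulVec f)
  simp only [vK, Matrix.add_mulVec, Matrix.smul_mulVec, Pi.add_apply, Pi.smul_apply, smul_eq_mul,
    hFP, hPF]
  simp only [Matrix.mulVec, dotProduct, evenPart, Function.comp_apply, mul_sum, ← sum_add_distrib]
  exact sum_congr rfl fun y _ => by ring

theorem sum_vGibbs_mul_sub_vK_mulVec (f : VState n → ℝ) :
    ∑ x, vGibbs n β x * f x * (f x - (vK n β).mulVec f x) =
      ∑ x, vGibbs n β x * f x ^ 2 - ∑ x, vGibbs n β x * evenPart Neg.neg f x ^ 2 +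
        (1 / 2) * ∑ x, ∑ y, vGibbs n β x * vMH n β x y *
          (evenPart Neg.neg f x - evenPart Neg.neg f y) ^ 2 := by
  set e := evenPart Neg.neg f
  have hPe : ∀ x, (vMH n β).mulVec e (-x) = (vMH n β).mulVec e x := fun x => by
    rw [← mulVec_comp_of_involutive neg_involutive vMH_neg_neg]
    congr 1
    exact funext (evenPart_apply_of_involutive neg_involutive f)
  have hproj : ∑ x, vGibbs n β x * e x * (vMH n β).mulVec e x =
      ∑ x, vGibbs n β x * f x * (vMH n β).mulVec e x :=
    sum_mul_evenPart_mul neg_involutive vGibbs_neg hPe f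
  rw [vK_mulVec, ← sum_mul_sub_mulVec_eq_half_sum_sq sum_vMH_eq_one vGibbs_mul_vMH_comm]
  simp only [mul_sub, sum_sub_distrib, sq, ← mul_assoc]
  rw [hproj]
  ring

theorem sum_vGibbs_ofNat_mul_sq_le (g : VState n → ℝ) :
    (1 / 4) * ∑ k ∈ range n, vGibbs n β (ofNat n k) * (g (ofNat n k) - g (ofNat n (k + 1))) ^ 2 ≤
      (1 / 2) * ∑ x, ∑ y, vGibbs n β x * vMH n β x y * (g x - g y) ^ 2 := by
  set F : VState n × VState n → ℝ := fun p => vGibbs n β p.1 * vMH n β p.1 p.2 * (g p.1 - g p.2) ^ 2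
  have hF : ∀ p, 0 ≤ F p := fun ⟨x, y⟩ => by
    by_cases hxy : y = x
    · simp [F, hxy]
    · have : 0 ≤ vMH n β x y := by rw [vMH, if_neg hxy]; exact vProp_nonneg x y
      have := vGibbs_nonneg (β := β) x
      positivity
  have hinj : Set.InjOn (fun k => (ofNat n k, ofNat n (k + 1))) (range n) := by
    intro k hk l hl hkl
    have := congrArg (fun p => ((p.1 : VState n) : ℤ)) hkl
    simp only [coe_ofNat (mem_range.mp (mem_coe.mp hk)).le,
      coe_ofNat (mem_range.mp (mem_coe.mp hl)).le] at this
    exact_mod_cast this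
  calc (1 / 4) * ∑ k ∈ range n, vGibbs n β (ofNat n k) * (g (ofNat n k) - g (ofNat n (k + 1))) ^ 2
      = (1 / 2) * ∑ k ∈ range n, F (ofNat n k, ofNat n (k + 1)) := by
        rw [mul_sum, mul_sum]
        refine sum_congr rfl fun k hk => ?_
        simp only [F, vMH_ofNat_succ (mem_range.mp hk)]
        ring
    _ = (1 / 2) * ∑ p ∈ (range n).image (fun k => (ofNat n k, ofNat n (k + 1))), F p := by
        rw [sum_image hinj]
    _ ≤ (1 / 2) * ∑ p, F p :=
        mul_le_mul_of_nonneg_left (sum_le_univ_sum_of_nonneg hF) (by norm_num)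
    _ = (1 / 2) * ∑ x, ∑ y, vGibbs n β x * vMH n β x y * (g x - g y) ^ 2 := by
        rw [Fintype.sum_prod_type]

theorem vGibbs_mul_sq_sub_le (hβ : 0 ≤ β) {g : VState n → ℝ} (hg : ∀ x, g (-x) = g x)
    (x : VState n) :
    vGibbs n β x * (g x - g (ofNat n n)) ^ 2 ≤
      n * ∑ k ∈ range n, vGibbs n β (ofNat n k) * (g (ofNat n k) - g (ofNat n (k + 1))) ^ 2 := by
  set m := (x : ℤ).natAbs
  set a : ℕ → ℝ := fun k => g (ofNat n k)
  have hm : m ≤ n := natAbs_le x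
  have hx : g x = a m := by
    rcases ofNat_natAbs_eq_or_neg x with h | h <;> simp only [a, m, h, hg]
  have hmono : ∀ k ∈ Ico m n, vGibbs n β x ≤ vGibbs n β (ofNat n k) := fun k hk =>
    vGibbs_le_of_natAbs_le hβ <| by
      rw [coe_ofNat (mem_Ico.mp hk).2.le, Int.natAbs_natCast]; exact (mem_Ico.mp hk).1
  have hpath := sq_sub_le_mul_sum_sq_sub a hm
  calc vGibbs n β x * (g x - g (ofNat n n)) ^ 2
      ≤ vGibbs n β x * ((n - m : ℕ) * ∑ k ∈ Ico m n, (a k - a (k + 1)) ^ 2) := by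
        rw [hx]; exact mul_le_mul_of_nonneg_left hpath (vGibbs_nonneg x)
    _ ≤ n * ∑ k ∈ Ico m n, vGibbs n β x * (a k - a (k + 1)) ^ 2 := by
        rw [← mul_sum, mul_left_comm]
        gcongr
        · exact mul_nonneg (vGibbs_nonneg x) (sum_nonneg fun _ _ => sq_nonneg _)
        · exact_mod_cast Nat.sub_le n m
    _ ≤ n * ∑ k ∈ range n, vGibbs n β (ofNat n k) * (a k - a (k + 1)) ^ 2 := by
        gcongr with k hk
        calc ∑ k ∈ Ico m n, vGibbs n β x * (a k - a (k + 1)) ^ 2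
            ≤ ∑ k ∈ Ico m n, vGibbs n β (ofNat n k) * (a k - a (k + 1)) ^ 2 :=
              sum_le_sum fun k hk => mul_le_mul_of_nonneg_right (hmono k hk) (sq_nonneg _)
          _ ≤ ∑ k ∈ range n, vGibbs n β (ofNat n k) * (a k - a (k + 1)) ^ 2 :=
              sum_le_sum_of_subset_of_nonneg (fun k hk => mem_range.mpr (mem_Ico.mp hk).2)
                fun k _ _ => mul_nonneg (vGibbs_nonneg _) (sq_nonneg _)

theorem sum_vGibbs_mul_sq_le (hβ : 0 ≤ β) {g : VState n → ℝ} (hg : ∀ x, g (-x) = g x)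
    (hmean : ∑ x, vGibbs n β x * g x = 0) :
    ∑ x, vGibbs n β x * g x ^ 2 ≤ (2 * n + 1) * n *
      ∑ k ∈ range n, vGibbs n β (ofNat n k) * (g (ofNat n k) - g (ofNat n (k + 1))) ^ 2 := by
  calc ∑ x, vGibbs n β x * g x ^ 2
      ≤ ∑ x, vGibbs n β x * (g x - g (ofNat n n)) ^ 2 :=
        sum_mul_sq_le_sum_mul_sq_sub vGibbs_nonneg hmean _
    _ ≤ ∑ _x : VState n, n * ∑ k ∈ range n,
          vGibbs n β (ofNat n k) * (g (ofNat n k) - g (ofNat n (k + 1))) ^ 2 :=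
        sum_le_sum fun x _ => vGibbs_mul_sq_sub_le hβ hg x
    _ = _ := by
        rw [sum_const, card_univ, VState.card, nsmul_eq_mul]
        push_cast
        ring

end Chain

theorem div_le_one_sub_add {δ A S D : ℝ} (n : ℕ) (hδ : δ ≤ 1) (hA : A ≤ 1) (hS : 0 ≤ S)
    (hAS : A ≤ (2 * n + 1) * n * S) (hSD : (1 / 4) * S ≤ D) :
    δ / (36 * (n : ℝ) ^ 3) ≤ 1 - A + D := by
  rcases Nat.eq_zero_or_pos n with rfl | hn
  · simp only [CharP.cast_eq_zero, ne_eq, OfNat.ofNat_ne_zero, not_false_eq_true, zero_pow,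
      mul_zero, div_zero]
    linarith
  have hn1 : (1 : ℝ) ≤ n := by exact_mod_cast hn
  have hA3 : A ≤ 3 * n ^ 2 * S := hAS.trans (by nlinarith [mul_le_mul_of_nonneg_right hn1 hS])
  rw [div_le_iff₀ (by positivity)]
  nlinarith [mul_le_mul_of_nonneg_left hA3 (by positivity : (0 : ℝ) ≤ 3 * n),
    mul_nonneg (sub_nonneg.mpr hA) (by nlinarith : (0 : ℝ) ≤ 36 * n ^ 3 - 3 * n),
    mul_le_mul_of_nonneg_left hSD (by positivity : (0 : ℝ) ≤ 36 * n ^ 3)]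

theorem stmt17_general (n : ℕ) (β : ℝ) (hβ : 0 < β)
    (f : VState n → ℝ)
    (hmean : ∑ x, vGibbs n β x * f x = 0)
    (hnorm : ∑ x, vGibbs n β x * f x ^ 2 = 1) :
    (1 - Real.exp (-β)) / (36 * (n : ℝ) ^ 3) ≤
      ∑ x, vGibbs n β x * f x * (f x - (vK n β).mulVec f x) := by
  set e := evenPart Neg.neg f
  have he : ∀ x, e (-x) = e x := evenPart_apply_of_involutive neg_involutive f
  have hmean_e : ∑ x, vGibbs n β x * e x = 0 := by
    rw [← hmean]
    simpa only [mul_one] using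
      sum_mul_evenPart_mul neg_involutive vGibbs_neg (g := fun _ => 1) (fun _ => rfl) f
  have hnorm_e : ∑ x, vGibbs n β x * e x ^ 2 ≤ 1 :=
    hnorm ▸ sum_mul_evenPart_sq_le neg_involutive vGibbs_neg vGibbs_nonneg f
  have hS : 0 ≤ ∑ k ∈ range n, vGibbs n β (VState.ofNat n k) *
      (e (VState.ofNat n k) - e (VState.ofNat n (k + 1))) ^ 2 :=
    sum_nonneg fun _ _ => mul_nonneg (vGibbs_nonneg _) (sq_nonneg _)
  have hδ : 1 - Real.exp (-β) ≤ 1 := by linarith [Real.exp_pos (-β)]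
  rw [sum_vGibbs_mul_sub_vK_mulVec, hnorm]
  exact div_le_one_sub_add n hδ hnorm_e hS (sum_vGibbs_mul_sq_le hβ.le he hmean_e)
    (sum_vGibbs_ofNat_mul_sq_le e)

/-- the right spectral gap of the double-averaged Metropolis chain on the
bimodal V-shaped Gibbs distribution satisfies `λ(K) ≥ (1 - e^{-β}) / (36 n³)`:
every mean-zero, unit-norm `f ∈ L²(π_β)` has Dirichlet form at least this constant. -/
theorem stmt17 (n : ℕ) (hn : 1 ≤ n) (β : ℝ) (hβ : 0 < β)
    (f : VState n → ℝ)
    (hmean : ∑ x, vGibbs n β x * f x = 0)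
    (hnorm : ∑ x, vGibbs n β x * f x ^ 2 = 1) :
    (1 - Real.exp (-β)) / (36 * (n : ℝ) ^ 3) ≤
      ∑ x, vGibbs n β x * f x * (f x - (vK n β).mulVec f x) :=
  stmt17_general n β hβ f hmean hnorm
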